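/- Let A = [a_{ij}] be a k × ℓ transformation matrix that is disjointly decomposable by invariant pairs (I₁,J₁),…,(I_N,J_N), and for each n let A_n be the k × ℓ matrix whose (i,j)-entry is a_{ij} if (i,j) ∈ I_n × J_n and 0 otherwise. Assume each A_n has rank one; equivalently, setting λ_{in} = Σ_j (A_n)_{ij}, ρ_{nj} = Σ_i (A_n)_{ij} and |A_n| = Σ_{i,j} (A_n)_{ij}, one has (A_n)_{ij} = λ_{in}ρ_{nj}/|A_n| for all i,j. Define L = [λ_{in}]_{k×N} and R = [ρ_{nj}]_{N×ℓ}. Then L and R are transformation matrices and for all copulas C₁, C₂: [L](C₁) * [R](C₂) = [A](C₁ * C₂). -/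

import Mathlib

open Set

noncomputable section

/-- A (bivariate) copula, as a function `C : ℝ × ℝ → ℝ` whose defining properties are imposed
on the unit square `[0,1]²`: `C(u,0) = C(0,v) = 0`, `C(u,1) = u`, `C(1,v) = v`, and
2-increasingness. -/
def IsCopula (C : ℝ → ℝ → ℝ) : Prop :=
  (∀ u ∈ Icc (0:ℝ) 1, C u 0 = 0) ∧
  (∀ v ∈ Icc (0:ℝ) 1, C 0 v = 0) ∧
  (∀ u ∈ Icc (0:ℝ) 1, C u 1 = u) ∧
  (∀ v ∈ Icc (0:ℝ) 1, C 1 v = v) ∧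
  (∀ u₁ u₂ v₁ v₂ : ℝ, u₁ ∈ Icc (0:ℝ) 1 → u₂ ∈ Icc (0:ℝ) 1 → v₁ ∈ Icc (0:ℝ) 1 →
    v₂ ∈ Icc (0:ℝ) 1 → u₁ ≤ u₂ → v₁ ≤ v₂ →
    0 ≤ C u₂ v₂ - C u₂ v₁ - C u₁ v₂ + C u₁ v₁)

/-- A `k × ℓ` transformation matrix: nonnegative entries summing to `1`, every row and every
column containing a nonzero entry.  (The index `i : Fin k` is the column index and
`j : Fin ℓ` is the row index.) -/
def IsTransfMatrix {k ℓ : ℕ} (a : Fin k → Fin ℓ → ℝ) : Prop :=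
  (∀ i j, 0 ≤ a i j) ∧ (∑ i, ∑ j, a i j = 1) ∧
  (∀ j, ∃ i, a i j ≠ 0) ∧ (∀ i, ∃ j, a i j ≠ 0)

/-- `pP a m` is `p_m`: the sum of the entries in the first `m` columns of `a`. -/
def pP {k ℓ : ℕ} (a : Fin k → Fin ℓ → ℝ) (m : ℕ) : ℝ :=
  ∑ i : Fin k, if (i : ℕ) < m then ∑ j, a i j else 0

/-- `qQ a m` is `q_m`: the sum of the entries in the first `m` rows of `a`. -/
def qQ {k ℓ : ℕ} (a : Fin k → Fin ℓ → ℝ) (m : ℕ) : ℝ :=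
  ∑ j : Fin ℓ, if (j : ℕ) < m then ∑ i, a i j else 0

/-- `F_i(u) = min(1, (u − p_{i−1})/Δp_i) · 𝟙_{(p_{i−1},∞)}(u)`, the uniform distribution
function on `[p_{i−1}, p_i]` (here `i : Fin k` denotes the `(i+1)`-st column, so
`p_{i−1} = pP a i` and `p_i = pP a (i+1)`). -/
def Fdist {k ℓ : ℕ} (a : Fin k → Fin ℓ → ℝ) (i : Fin k) (u : ℝ) : ℝ :=
  if pP a (i : ℕ) < u then min 1 ((u - pP a (i : ℕ)) / (pP a ((i : ℕ) + 1) - pP a (i : ℕ)))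
  else 0

/-- `G_j(v) = min(1, (v − q_{j−1})/Δq_j) · 𝟙_{(q_{j−1},∞)}(v)`. -/
def Gdist {k ℓ : ℕ} (a : Fin k → Fin ℓ → ℝ) (j : Fin ℓ) (v : ℝ) : ℝ :=
  if qQ a (j : ℕ) < v then min 1 ((v - qQ a (j : ℕ)) / (qQ a ((j : ℕ) + 1) - qQ a (j : ℕ)))
  else 0

/-- The patching operator `[A]`: `[A](C)(u,v) = Σ_i Σ_j a_{ij} C(F_i(u), G_j(v))`. -/
def patch {k ℓ : ℕ} (a : Fin k → Fin ℓ → ℝ) (C : ℝ → ℝ → ℝ) : ℝ → ℝ → ℝ :=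
  fun u v => ∑ i, ∑ j, a i j * C (Fdist a i u) (Gdist a j v)

/-- First partial derivative `∂₁C` (defined via `deriv`, which agrees a.e. with the
almost-everywhere existing partial derivative of a copula). -/
def d1 (C : ℝ → ℝ → ℝ) (u v : ℝ) : ℝ := deriv (fun x => C x v) u

/-- Second partial derivative `∂₂C`. -/
def d2 (C : ℝ → ℝ → ℝ) (u v : ℝ) : ℝ := deriv (fun y => C u y) v

/-- `‖C‖₁² = ∫₀¹∫₀¹ |∂₁C(u,v)|² du dv`. -/
def sobSq1 (C : ℝ → ℝ → ℝ) : ℝ := ∫ v in (0:ℝ)..1, ∫ u in (0:ℝ)..1, (d1 C u v) ^ 2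

/-- `‖C‖₂² = ∫₀¹∫₀¹ |∂₂C(u,v)|² du dv`. -/
def sobSq2 (C : ℝ → ℝ → ℝ) : ℝ := ∫ v in (0:ℝ)..1, ∫ u in (0:ℝ)..1, (d2 C u v) ^ 2

/-- The modified Sobolev norm `‖C‖_S = (‖C‖₁² + ‖C‖₂²)^{1/2}`. -/
def sobNorm (C : ℝ → ℝ → ℝ) : ℝ := Real.sqrt (sobSq1 C + sobSq2 C)

/-- Pointwise difference of two bivariate functions. -/
def csub (C D : ℝ → ℝ → ℝ) : ℝ → ℝ → ℝ := fun u v => C u v - D u v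

/-- The `*`-product of copulas: `(C*D)(u,v) = ∫₀¹ ∂₂C(u,t) ∂₁D(t,v) dt`. -/
def cstar (C D : ℝ → ℝ → ℝ) : ℝ → ℝ → ℝ :=
  fun u v => ∫ t in (0:ℝ)..1, d2 C u t * d1 D t v

/-- Transpose of a copula: `C^t(u,v) = C(v,u)`. -/
def ctransp (C : ℝ → ℝ → ℝ) : ℝ → ℝ → ℝ := fun u v => C v u

/-- `C` is left invertible: `C^t * C = M` on `[0,1]²`, where `M(u,v) = min(u,v)`. -/
def LeftInvertibleC (C : ℝ → ℝ → ℝ) : Prop :=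
  ∀ u ∈ Icc (0:ℝ) 1, ∀ v ∈ Icc (0:ℝ) 1, cstar (ctransp C) C u v = min u v

/-- `C` is right invertible: `C * C^t = M` on `[0,1]²`. -/
def RightInvertibleC (C : ℝ → ℝ → ℝ) : Prop :=
  ∀ u ∈ Icc (0:ℝ) 1, ∀ v ∈ Icc (0:ℝ) 1, cstar C (ctransp C) u v = min u v

/-- `(I, J)` is an invariant pair of the transformation matrix `a`: `I, J` nonempty,
`a_{ij} = 0` for `(i,j) ∈ (I × Jᶜ) ∪ (Iᶜ × J)`, and `a_{ij} > 0` for some `(i,j) ∈ I × J`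
(equivalently, some entry indexed by `I × J` is nonzero, entries being nonnegative). -/
def IsInvariantPair {k ℓ : ℕ} (a : Fin k → Fin ℓ → ℝ)
    (I : Finset (Fin k)) (J : Finset (Fin ℓ)) : Prop :=
  I.Nonempty ∧ J.Nonempty ∧
  (∀ i j, ((i ∈ I ∧ j ∉ J) ∨ (i ∉ I ∧ j ∈ J)) → a i j = 0) ∧
  (∃ i ∈ I, ∃ j ∈ J, a i j ≠ 0)

/-- `a` is disjointly decomposable by the `N` invariant pairs `(I n, J n)`: the pairs are
invariant pairs, pairwise disjoint, and their unions cover all columns and rows. -/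
def DisjointlyDecomposable {k ℓ N : ℕ} (a : Fin k → Fin ℓ → ℝ)
    (I : Fin N → Finset (Fin k)) (J : Fin N → Finset (Fin ℓ)) : Prop :=
  (∀ n, IsInvariantPair a (I n) (J n)) ∧
  (∀ m n, m ≠ n → Disjoint (I m) (I n) ∧ Disjoint (J m) (J n)) ∧
  (∀ i, ∃ n, i ∈ I n) ∧ (∀ j, ∃ n, j ∈ J n)


/-- Facts about a monotone 1-Lipschitz slice on [0,1]. -/
lemma slice_facts (f : ℝ → ℝ)
    (hmono : ∀ a ∈ Icc (0:ℝ) 1, ∀ b ∈ Icc (0:ℝ) 1, a ≤ b → f a ≤ f b)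
    (hlip : ∀ a ∈ Icc (0:ℝ) 1, ∀ b ∈ Icc (0:ℝ) 1, a ≤ b → f b - f a ≤ b - a) :
    (∀ᵐ s, s ∈ Ioo (0:ℝ) 1 → DifferentiableAt ℝ f s) ∧
    (∀ s ∈ Ioo (0:ℝ) 1, |deriv f s| ≤ 1) := by
  set c : ℝ → ℝ := fun y => max 0 (min 1 y) with hc
  have hcmem : ∀ y, c y ∈ Icc (0:ℝ) 1 := by
    intro y
    constructor
    · exact le_max_left _ _
    · simp only [hc, max_le_iff]
      constructor
      · norm_num
      · exact min_le_left _ _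
  have hceq : ∀ y ∈ Icc (0:ℝ) 1, c y = y := by
    intro y hy
    simp only [hc]
    rw [min_eq_right hy.2, max_eq_right hy.1]
  have hcmono : Monotone c := by
    intro p q hpq
    exact max_le_max le_rfl (min_le_min le_rfl hpq)
  have hclip : ∀ p q : ℝ, p ≤ q → c q - c p ≤ q - p := by
    intro p q hpq
    simp only [hc]
    rcases le_total q 1 with h1 | h1
    · rw [min_eq_right h1, min_eq_right (hpq.trans h1)]
      rcases le_total p 0 with h0 | h0
      · rw [max_eq_left h0]
        rcases le_total q 0 with h2 | h2
        · rw [max_eq_left h2]; linarith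
        · rw [max_eq_right h2]; linarith
      · rw [max_eq_right h0, max_eq_right (h0.trans hpq)]
    · rw [min_eq_left h1, max_eq_right (by norm_num : (0:ℝ) ≤ 1)]
      rcases le_total q 0 with h2 | h2
      · linarith
      · rcases le_total p 1 with h3 | h3
        · rcases le_total p 0 with h4 | h4
          · rw [min_eq_right h3, max_eq_left h4]; linarith
          · rw [min_eq_right h3, max_eq_right h4]; linarith
        · rw [min_eq_left h3, max_eq_right (by norm_num : (0:ℝ) ≤ 1)]; linarith
  set g : ℝ → ℝ := fun y => f (c y) with hg
  have hgmono : Monotone g := fun p q hpq =>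
    hmono _ (hcmem p) _ (hcmem q) (hcmono hpq)
  have hglip : LipschitzWith 1 g := by
    apply LipschitzWith.of_dist_le_mul
    intro p q
    simp only [Real.dist_eq, NNReal.coe_one, one_mul]
    rcases le_total p q with hpq | hpq
    · have h1 : g p ≤ g q := hgmono hpq
      have h2 : g q - g p ≤ c q - c p :=
        hlip _ (hcmem p) _ (hcmem q) (hcmono hpq)
      have h3 : c q - c p ≤ q - p := hclip _ _ hpq
      rw [abs_sub_comm, abs_of_nonneg (by linarith), abs_sub_comm,
        abs_of_nonneg (by linarith)]
      linarith
    · have h1 : g q ≤ g p := hgmono hpq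
      have h2 : g p - g q ≤ c p - c q :=
        hlip _ (hcmem q) _ (hcmem p) (hcmono hpq)
      have h3 : c p - c q ≤ p - q := hclip _ _ hpq
      rw [abs_of_nonneg (by linarith), abs_of_nonneg (by linarith)]
      linarith
  have heq : ∀ s ∈ Ioo (0:ℝ) 1, g =ᶠ[nhds s] f := by
    intro s hs
    filter_upwards [isOpen_Ioo.mem_nhds hs] with y hy
    simp only [hg]
    rw [hceq y ⟨hy.1.le, hy.2.le⟩]
  constructor
  · filter_upwards [hgmono.ae_differentiableAt] with s hs hsm
    exact (heq s hsm).symm.differentiableAt_iff.mpr hs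
  · intro s hs
    rw [← (heq s hs).deriv_eq]
    have h1 : ‖fderiv ℝ g s‖ ≤ 1 := by
      simpa using norm_fderiv_le_of_lipschitz ℝ hglip
    calc |deriv g s| = ‖fderiv ℝ g s 1‖ := by
          rw [← fderiv_apply_one_eq_deriv]; rfl
      _ ≤ ‖fderiv ℝ g s‖ * ‖(1:ℝ)‖ := (fderiv ℝ g s).le_opNorm 1
      _ ≤ 1 := by simpa using h1
section AuxLemmas
open MeasureTheory

variable {K M : ℕ}

lemma qQ_mono (b : Fin K → Fin M → ℝ) (hb : ∀ i m, 0 ≤ b i m) :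
    Monotone (qQ b) := by
  intro m m' h
  apply Finset.sum_le_sum
  intro j _
  by_cases hj : (j:ℕ) < m
  · rw [if_pos hj, if_pos (lt_of_lt_of_le hj h)]
  · rw [if_neg hj]
    by_cases hj' : (j:ℕ) < m'
    · rw [if_pos hj']; exact Finset.sum_nonneg fun i _ => hb i j
    · rw [if_neg hj']

lemma pP_mono (b : Fin K → Fin M → ℝ) (hb : ∀ i m, 0 ≤ b i m) :
    Monotone (pP b) := by
  intro m m' h
  apply Finset.sum_le_sum
  intro i _
  by_cases hi : (i:ℕ) < m
  · rw [if_pos hi, if_pos (lt_of_lt_of_le hi h)]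
  · rw [if_neg hi]
    by_cases hi' : (i:ℕ) < m'
    · rw [if_pos hi']; exact Finset.sum_nonneg fun j _ => hb i j
    · rw [if_neg hi']

lemma qQ_succ (b : Fin K → Fin M → ℝ) (m : Fin M) :
    qQ b ((m:ℕ)+1) = qQ b (m:ℕ) + ∑ i, b i m := by
  have : ∀ j : Fin M, (if (j:ℕ) < (m:ℕ)+1 then ∑ i, b i j else 0)
      = (if (j:ℕ) < (m:ℕ) then ∑ i, b i j else 0) + (if j = m then ∑ i, b i j else 0) := by
    intro j
    by_cases hj : j = m
    · subst hj; simp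
    · have hne : (j:ℕ) ≠ (m:ℕ) := fun h => hj (Fin.ext h)
      by_cases hlt : (j:ℕ) < (m:ℕ)
      · rw [if_pos (by omega), if_pos hlt, if_neg hj, add_zero]
      · rw [if_neg (by omega), if_neg hlt, if_neg hj, add_zero]
  rw [qQ, qQ]
  rw [Finset.sum_congr rfl (fun j _ => this j), Finset.sum_add_distrib,
    Finset.sum_ite_eq' Finset.univ m (fun j => ∑ i, b i j)]
  simp

lemma pP_succ (b : Fin K → Fin M → ℝ) (m : Fin K) :
    pP b ((m:ℕ)+1) = pP b (m:ℕ) + ∑ j, b m j := by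
  have : ∀ i : Fin K, (if (i:ℕ) < (m:ℕ)+1 then ∑ j, b i j else 0)
      = (if (i:ℕ) < (m:ℕ) then ∑ j, b i j else 0) + (if i = m then ∑ j, b i j else 0) := by
    intro i
    by_cases hi : i = m
    · subst hi; simp
    · have hne : (i:ℕ) ≠ (m:ℕ) := fun h => hi (Fin.ext h)
      by_cases hlt : (i:ℕ) < (m:ℕ)
      · rw [if_pos (by omega), if_pos hlt, if_neg hi, add_zero]
      · rw [if_neg (by omega), if_neg hlt, if_neg hi, add_zero]
  rw [pP, pP]
  rw [Finset.sum_congr rfl (fun i _ => this i), Finset.sum_add_distrib,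
    Finset.sum_ite_eq' Finset.univ m (fun i => ∑ j, b i j)]
  simp

lemma Fdist_mem (b : Fin K → Fin M → ℝ) (hb : ∀ i m, 0 ≤ b i m) (i : Fin K) (u : ℝ) :
    Fdist b i u ∈ Set.Icc (0:ℝ) 1 := by
  rw [Fdist]
  by_cases h : pP b (i:ℕ) < u
  · rw [if_pos h]
    have hΔ : 0 ≤ pP b ((i:ℕ)+1) - pP b (i:ℕ) := by
      have := pP_mono b hb (Nat.le_succ (i:ℕ)); linarith
    constructor
    · exact le_min (by norm_num) (div_nonneg (by linarith) hΔ)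
    · exact min_le_left _ _
  · rw [if_neg h]; exact ⟨le_rfl, by norm_num⟩

lemma Gdist_mem (b : Fin K → Fin M → ℝ) (hb : ∀ i m, 0 ≤ b i m) (j : Fin M) (v : ℝ) :
    Gdist b j v ∈ Set.Icc (0:ℝ) 1 := by
  rw [Gdist]
  by_cases h : qQ b (j:ℕ) < v
  · rw [if_pos h]
    have hΔ : 0 ≤ qQ b ((j:ℕ)+1) - qQ b (j:ℕ) := by
      have := qQ_mono b hb (Nat.le_succ (j:ℕ)); linarith
    constructor
    · exact le_min (by norm_num) (div_nonneg (by linarith) hΔ)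
    · exact min_le_left _ _
  · rw [if_neg h]; exact ⟨le_rfl, by norm_num⟩

end AuxLemmas
section DerivLemmas
open MeasureTheory Filter

variable {K M : ℕ}

lemma d2_patch (b : Fin K → Fin M → ℝ) (hb : ∀ i m, 0 ≤ b i m)
    (C : ℝ → ℝ → ℝ) (u t : ℝ) (n : Fin M)
    (hlo : qQ b (n:ℕ) < t) (hhi : t < qQ b ((n:ℕ)+1))
    (hdiff : ∀ i, DifferentiableAt ℝ (fun y => C (Fdist b i u) y)
      ((t - qQ b (n:ℕ)) / (qQ b ((n:ℕ)+1) - qQ b (n:ℕ)))) :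
    d2 (patch b C) u t
      = (∑ i, b i n * d2 C (Fdist b i u)
          ((t - qQ b (n:ℕ)) / (qQ b ((n:ℕ)+1) - qQ b (n:ℕ))))
        / (qQ b ((n:ℕ)+1) - qQ b (n:ℕ)) := by
  set q0 := qQ b (n:ℕ) with hq0
  set q1 := qQ b ((n:ℕ)+1) with hq1
  have hΔ : 0 < q1 - q0 := by linarith
  set s : ℝ := (t - q0) / (q1 - q0) with hs
  have hU : Set.Ioo q0 q1 ∈ nhds t := isOpen_Ioo.mem_nhds ⟨hlo, hhi⟩
  -- the n-th distribution function is affine on the block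
  have hGn : ∀ y ∈ Set.Ioo q0 q1, Gdist b n y = (y - q0) / (q1 - q0) := by
    intro y hy
    rw [Gdist, ← hq0, ← hq1, if_pos hy.1, min_eq_right]
    exact div_le_one_of_le₀ (by linarith [hy.2]) (by linarith)
  -- the other distribution functions are constant on the block
  have hGm : ∀ m : Fin M, m ≠ n → ∃ cm : ℝ, ∀ y ∈ Set.Ioo q0 q1, Gdist b m y = cm := by
    intro m hm
    have hne : (m:ℕ) ≠ (n:ℕ) := fun h => hm (Fin.ext h)
    rcases hne.lt_or_gt with h | h
    · -- m < n : the distribution function is 1 (or 0 if the column is degenerate)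
      have h1 : qQ b ((m:ℕ)+1) ≤ q0 := qQ_mono b hb (by omega)
      have h0 : qQ b (m:ℕ) ≤ qQ b ((m:ℕ)+1) := qQ_mono b hb (Nat.le_succ _)
      by_cases hdeg : qQ b ((m:ℕ)+1) - qQ b (m:ℕ) = 0
      · refine ⟨min 1 0, fun y hy => ?_⟩
        rw [Gdist, if_pos (by linarith [hy.1]), hdeg, div_zero]
      · refine ⟨1, fun y hy => ?_⟩
        have hpos : 0 < qQ b ((m:ℕ)+1) - qQ b (m:ℕ) := lt_of_le_of_ne (by linarith) (Ne.symm hdeg)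
        rw [Gdist, if_pos (by linarith [hy.1]), min_eq_left]
        rw [le_div_iff₀ hpos, one_mul]
        have := hy.1
        linarith
    · -- n < m : the distribution function is 0 on the block
      have h1 : q1 ≤ qQ b (m:ℕ) := qQ_mono b hb (by omega)
      exact ⟨0, fun y hy => by rw [Gdist, if_neg (by push_neg; linarith [hy.2])]⟩
  have key : HasDerivAt (fun y => ∑ i, ∑ m, b i m * C (Fdist b i u) (Gdist b m y))
      (∑ i, ∑ m : Fin M, (if m = n then b i m * (d2 C (Fdist b i u) s * (q1 - q0)⁻¹) else 0))
      t := by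
    apply HasDerivAt.fun_sum
    intro i _
    apply HasDerivAt.fun_sum
    intro m _
    by_cases hm : m = n
    · subst hm
      rw [if_pos rfl]
      have hinner : HasDerivAt (fun y => (y - q0) / (q1 - q0)) ((q1 - q0)⁻¹) t := by
        simpa [one_div] using ((hasDerivAt_id t).sub_const q0).div_const (q1 - q0)
      have houter : HasDerivAt (fun y => C (Fdist b i u) y) (d2 C (Fdist b i u) s) s :=
        (hdiff i).hasDerivAt
      have hcomp := HasDerivAt.comp t houter hinner
      have heq : (fun y => C (Fdist b i u) (Gdist b m y))
          =ᶠ[nhds t] ((fun y => C (Fdist b i u) y) ∘ fun y => (y - q0) / (q1 - q0)) := by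
        filter_upwards [hU] with y hy
        simp only [Function.comp]
        rw [hGn y hy]
      exact (heq.hasDerivAt_iff.mpr hcomp).const_mul (b i m)
    · rw [if_neg hm]
      obtain ⟨cm, hcm⟩ := hGm m hm
      have heq : (fun y => C (Fdist b i u) (Gdist b m y)) =ᶠ[nhds t]
          fun _ => C (Fdist b i u) cm := by
        filter_upwards [hU] with y hy
        rw [hcm y hy]
      have h0 : HasDerivAt (fun y => C (Fdist b i u) (Gdist b m y)) 0 t :=
        heq.hasDerivAt_iff.mpr (hasDerivAt_const t _)
      simpa using h0.const_mul (b i m)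
  have hderiv : d2 (patch b C) u t
      = ∑ i, ∑ m : Fin M, (if m = n then b i m * (d2 C (Fdist b i u) s * (q1 - q0)⁻¹) else 0) := by
    simp only [d2, patch]
    exact key.deriv
  rw [hderiv]
  rw [Finset.sum_div]
  apply Finset.sum_congr rfl
  intro i _
  rw [Finset.sum_ite_eq' Finset.univ n (fun m => b i m * (d2 C (Fdist b i u) s * (q1 - q0)⁻¹))]
  simp only [Finset.mem_univ, if_pos]
  field_simp

lemma d1_patch (b : Fin K → Fin M → ℝ) (hb : ∀ i m, 0 ≤ b i m)
    (C : ℝ → ℝ → ℝ) (v t : ℝ) (n : Fin K)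
    (hlo : pP b (n:ℕ) < t) (hhi : t < pP b ((n:ℕ)+1))
    (hdiff : ∀ j, DifferentiableAt ℝ (fun x => C x (Gdist b j v))
      ((t - pP b (n:ℕ)) / (pP b ((n:ℕ)+1) - pP b (n:ℕ)))) :
    d1 (patch b C) t v
      = (∑ j, b n j * d1 C
          ((t - pP b (n:ℕ)) / (pP b ((n:ℕ)+1) - pP b (n:ℕ))) (Gdist b j v))
        / (pP b ((n:ℕ)+1) - pP b (n:ℕ)) := by
  set q0 := pP b (n:ℕ) with hq0
  set q1 := pP b ((n:ℕ)+1) with hq1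
  have hΔ : 0 < q1 - q0 := by linarith
  set s : ℝ := (t - q0) / (q1 - q0) with hs
  have hU : Set.Ioo q0 q1 ∈ nhds t := isOpen_Ioo.mem_nhds ⟨hlo, hhi⟩
  have hFn : ∀ y ∈ Set.Ioo q0 q1, Fdist b n y = (y - q0) / (q1 - q0) := by
    intro y hy
    rw [Fdist, ← hq0, ← hq1, if_pos hy.1, min_eq_right]
    exact div_le_one_of_le₀ (by linarith [hy.2]) (by linarith)
  have hFm : ∀ m : Fin K, m ≠ n → ∃ cm : ℝ, ∀ y ∈ Set.Ioo q0 q1, Fdist b m y = cm := by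
    intro m hm
    have hne : (m:ℕ) ≠ (n:ℕ) := fun h => hm (Fin.ext h)
    rcases hne.lt_or_gt with h | h
    · have h1 : pP b ((m:ℕ)+1) ≤ q0 := pP_mono b hb (by omega)
      have h0 : pP b (m:ℕ) ≤ pP b ((m:ℕ)+1) := pP_mono b hb (Nat.le_succ _)
      by_cases hdeg : pP b ((m:ℕ)+1) - pP b (m:ℕ) = 0
      · refine ⟨min 1 0, fun y hy => ?_⟩
        rw [Fdist, if_pos (by linarith [hy.1]), hdeg, div_zero]
      · refine ⟨1, fun y hy => ?_⟩
        have hpos : 0 < pP b ((m:ℕ)+1) - pP b (m:ℕ) := lt_of_le_of_ne (by linarith) (Ne.symm hdeg)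
        rw [Fdist, if_pos (by linarith [hy.1]), min_eq_left]
        rw [le_div_iff₀ hpos, one_mul]
        have := hy.1
        linarith
    · have h1 : q1 ≤ pP b (m:ℕ) := pP_mono b hb (by omega)
      exact ⟨0, fun y hy => by rw [Fdist, if_neg (by push_neg; linarith [hy.2])]⟩
  have key : HasDerivAt (fun x => ∑ i, ∑ j, b i j * C (Fdist b i x) (Gdist b j v))
      (∑ i : Fin K, ∑ j, (if i = n then b i j * (d1 C s (Gdist b j v) * (q1 - q0)⁻¹) else 0))
      t := by
    apply HasDerivAt.fun_sum
    intro i _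
    apply HasDerivAt.fun_sum
    intro j _
    by_cases hi : i = n
    · subst hi
      rw [if_pos rfl]
      have hinner : HasDerivAt (fun x => (x - q0) / (q1 - q0)) ((q1 - q0)⁻¹) t := by
        simpa [one_div] using ((hasDerivAt_id t).sub_const q0).div_const (q1 - q0)
      have houter : HasDerivAt (fun x => C x (Gdist b j v)) (d1 C s (Gdist b j v)) s :=
        (hdiff j).hasDerivAt
      have hcomp := HasDerivAt.comp t houter hinner
      have heq : (fun x => C (Fdist b i x) (Gdist b j v))
          =ᶠ[nhds t] ((fun x => C x (Gdist b j v)) ∘ fun x => (x - q0) / (q1 - q0)) := by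
        filter_upwards [hU] with y hy
        simp only [Function.comp]
        rw [hFn y hy]
      exact (heq.hasDerivAt_iff.mpr hcomp).const_mul (b i j)
    · rw [if_neg hi]
      obtain ⟨cm, hcm⟩ := hFm i hi
      have heq : (fun x => C (Fdist b i x) (Gdist b j v)) =ᶠ[nhds t]
          fun _ => C cm (Gdist b j v) := by
        filter_upwards [hU] with y hy
        rw [hcm y hy]
      have h0 : HasDerivAt (fun x => C (Fdist b i x) (Gdist b j v)) 0 t :=
        heq.hasDerivAt_iff.mpr (hasDerivAt_const t _)
      simpa using h0.const_mul (b i j)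
  have hderiv : d1 (patch b C) t v
      = ∑ i : Fin K, ∑ j, (if i = n then b i j * (d1 C s (Gdist b j v) * (q1 - q0)⁻¹) else 0) := by
    simp only [d1, patch]
    exact key.deriv
  rw [hderiv]
  rw [Finset.sum_comm]
  rw [Finset.sum_div]
  apply Finset.sum_congr rfl
  intro j _
  rw [Finset.sum_ite_eq' Finset.univ n (fun i => b i j * (d1 C s (Gdist b j v) * (q1 - q0)⁻¹))]
  simp only [Finset.mem_univ, if_pos]
  field_simp
open MeasureTheory in
/-- Let `A` be a `k × ℓ` transformation matrix, disjointly decomposable by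
invariant pairs `(I₁,J₁), …, (I_N,J_N)`, and let `A_n` be the matrix of the entries of `A`
indexed by `I_n × J_n` (zero elsewhere).  Assume each `A_n` has rank one, i.e. with
`λ_{in} = Σ_j (A_n)_{ij}`, `ρ_{nj} = Σ_i (A_n)_{ij}` and `|A_n| = Σ_{i,j} (A_n)_{ij}` one has
`(A_n)_{ij} = λ_{in} ρ_{nj} / |A_n|`.  Let `L = [λ_{in}]_{k×N}` and `R = [ρ_{nj}]_{N×ℓ}`.
Then `L` and `R` are transformation matrices and `[L](C₁) * [R](C₂) = [A](C₁ * C₂)` on the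
unit square, for all copulas `C₁, C₂`. -/
theorem stmt18 {k ℓ N : ℕ}
    (a : Fin k → Fin ℓ → ℝ) (ha : IsTransfMatrix a)
    (I : Fin N → Finset (Fin k)) (J : Fin N → Finset (Fin ℓ))
    (hdec : DisjointlyDecomposable a I J)
    (An : Fin N → Fin k → Fin ℓ → ℝ)
    (hAn : ∀ n i j, An n i j = if i ∈ I n ∧ j ∈ J n then a i j else 0)
    (L : Fin k → Fin N → ℝ) (hL : ∀ i n, L i n = ∑ j, An n i j)
    (R : Fin N → Fin ℓ → ℝ) (hR : ∀ n j, R n j = ∑ i, An n i j)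
    (hrank1 : ∀ n i j, An n i j = L i n * R n j / (∑ i', ∑ j', An n i' j')) :
    IsTransfMatrix L ∧ IsTransfMatrix R ∧
    ∀ C₁ C₂ : ℝ → ℝ → ℝ, IsCopula C₁ → IsCopula C₂ →
      ∀ u ∈ Icc (0:ℝ) 1, ∀ v ∈ Icc (0:ℝ) 1,
        cstar (patch L C₁) (patch R C₂) u v = patch a (cstar C₁ C₂) u v := by
  obtain ⟨hann, hasum, harow, hacol⟩ := ha
  obtain ⟨hinv, hdisj, hIcov, hJcov⟩ := hdec
  have hAnn : ∀ n i j, 0 ≤ An n i j := by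
    intro n i j; rw [hAn]; split
    · exact hann i j
    · exact le_rfl
  have hsumAn : ∀ i j, ∑ n, An n i j = a i j := by
    intro i j
    obtain ⟨n₀, hn₀⟩ := hIcov i
    rw [Finset.sum_eq_single n₀]
    · rw [hAn]
      by_cases hj : j ∈ J n₀
      · rw [if_pos ⟨hn₀, hj⟩]
      · rw [if_neg (by tauto)]
        exact ((hinv n₀).2.2.1 i j (Or.inl ⟨hn₀, hj⟩)).symm
    · intro n _ hne
      rw [hAn]
      have hi : i ∉ I n := fun hi => (Finset.disjoint_left.mp (hdisj n n₀ hne).1 hi) hn₀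
      rw [if_neg (by tauto)]
    · intro h; exact absurd (Finset.mem_univ n₀) h
  set S : Fin N → ℝ := fun n => ∑ i, ∑ j, An n i j with hS
  have hSpos : ∀ n, 0 < S n := by
    intro n
    obtain ⟨i, hi, j, hj, hne⟩ := (hinv n).2.2.2
    have h1 : 0 < An n i j := by
      have hne' : An n i j ≠ 0 := by rw [hAn, if_pos ⟨hi, hj⟩]; exact hne
      exact lt_of_le_of_ne (hAnn n i j) (Ne.symm hne')
    have h2 : An n i j ≤ ∑ j', An n i j' :=
      Finset.single_le_sum (fun j' _ => hAnn n i j') (Finset.mem_univ j)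
    have h3 : (∑ j', An n i j') ≤ S n :=
      Finset.single_le_sum (f := fun i' => ∑ j', An n i' j')
        (fun i' _ => Finset.sum_nonneg fun j' _ => hAnn n i' j') (Finset.mem_univ i)
    linarith
  have hSne : ∀ n, S n ≠ 0 := fun n => (hSpos n).ne'
  have hLnn : ∀ i n, 0 ≤ L i n := fun i n => by
    rw [hL]; exact Finset.sum_nonneg fun j _ => hAnn n i j
  have hRnn : ∀ n j, 0 ≤ R n j := fun n j => by
    rw [hR]; exact Finset.sum_nonneg fun i _ => hAnn n i j
  have hLrow : ∀ n, ∑ i, L i n = S n := by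
    intro n; simp only [hL, hS]
  have hRrow : ∀ n, ∑ j, R n j = S n := by
    intro n; simp only [hR, hS]; rw [Finset.sum_comm]
  have hLcolsum : ∀ i, ∑ n, L i n = ∑ j, a i j := by
    intro i; simp only [hL]; rw [Finset.sum_comm]
    exact Finset.sum_congr rfl fun j _ => hsumAn i j
  have hRcolsum : ∀ j, ∑ n, R n j = ∑ i, a i j := by
    intro j; simp only [hR]; rw [Finset.sum_comm]
    exact Finset.sum_congr rfl fun i _ => hsumAn i j
  have htotS : ∑ n, S n = 1 := by
    rw [← hasum]
    calc ∑ n, S n = ∑ n, ∑ i, L i n := Finset.sum_congr rfl fun n _ => (hLrow n).symm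
      _ = ∑ i, ∑ n, L i n := Finset.sum_comm
      _ = ∑ i, ∑ j, a i j := Finset.sum_congr rfl fun i _ => hLcolsum i
  -- the transformation matrix properties
  have hLtm : IsTransfMatrix L := by
    refine ⟨hLnn, ?_, ?_, ?_⟩
    · rw [Finset.sum_congr rfl fun i (_ : i ∈ Finset.univ) => hLcolsum i]; exact hasum
    · intro n
      by_contra hcon
      push_neg at hcon
      have : ∑ i, L i n = 0 := Finset.sum_eq_zero fun i _ => hcon i
      rw [hLrow n] at this
      exact hSne n this
    · intro i
      obtain ⟨n, hn⟩ := hIcov i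
      obtain ⟨j, hj⟩ := hacol i
      obtain ⟨m, hm⟩ := hJcov j
      have hmn : m = n := by
        by_contra hne
        exact hj ((hinv m).2.2.1 i j (Or.inr ⟨fun hi =>
          (Finset.disjoint_left.mp (hdisj m n hne).1 hi) hn, hm⟩))
      subst hmn
      refine ⟨m, fun h0 => hj ?_⟩
      have h1 : An m i j ≤ L i m := by
        rw [hL]
        exact Finset.single_le_sum (fun j' _ => hAnn m i j') (Finset.mem_univ j)
      have h2 : An m i j = 0 := le_antisymm (h0 ▸ h1) (hAnn m i j)
      rw [hAn, if_pos ⟨hn, hm⟩] at h2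
      exact h2
  have hRtm : IsTransfMatrix R := by
    refine ⟨hRnn, ?_, ?_, ?_⟩
    · rw [Finset.sum_congr rfl fun n (_ : n ∈ Finset.univ) => hRrow n]; exact htotS
    · intro j
      obtain ⟨m, hm⟩ := hJcov j
      obtain ⟨i, hi⟩ := harow j
      obtain ⟨n, hn⟩ := hIcov i
      have hmn : n = m := by
        by_contra hne
        exact hi ((hinv n).2.2.1 i j (Or.inl ⟨hn, fun hj =>
          (Finset.disjoint_left.mp (hdisj n m hne).2 hj) hm⟩))
      subst hmn
      refine ⟨n, fun h0 => hi ?_⟩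
      have h1 : An n i j ≤ R n j := by
        rw [hR]
        exact Finset.single_le_sum (fun i' _ => hAnn n i' j) (Finset.mem_univ i)
      have h2 : An n i j = 0 := le_antisymm (h0 ▸ h1) (hAnn n i j)
      rw [hAn, if_pos ⟨hn, hm⟩] at h2
      exact h2
    · intro n
      by_contra hcon
      push_neg at hcon
      have : ∑ j, R n j = 0 := Finset.sum_eq_zero fun j _ => hcon j
      rw [hRrow n] at this
      exact hSne n this
  refine ⟨hLtm, hRtm, ?_⟩
  intro C₁ C₂ hC₁ hC₂ u hu v hv
  -- marginal break points of L and R agree with those of a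
  have hpPL : ∀ m : ℕ, pP L m = pP a m := by
    intro m; rw [pP, pP]
    exact Finset.sum_congr rfl fun i _ => by
      by_cases h : (i:ℕ) < m
      · rw [if_pos h, if_pos h, hLcolsum i]
      · rw [if_neg h, if_neg h]
  have hqQR : ∀ m : ℕ, qQ R m = qQ a m := by
    intro m; rw [qQ, qQ]
    exact Finset.sum_congr rfl fun j _ => by
      by_cases h : (j:ℕ) < m
      · rw [if_pos h, if_pos h, hRcolsum j]
      · rw [if_neg h, if_neg h]
  have hqQL : ∀ m : ℕ, qQ L m = pP R m := by
    intro m; rw [qQ, pP]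
    exact Finset.sum_congr rfl fun n _ => by
      by_cases h : (n:ℕ) < m
      · rw [if_pos h, if_pos h, hLrow n, hRrow n]
      · rw [if_neg h, if_neg h]
  set T : ℕ → ℝ := fun m => pP R m with hT
  have hT0 : T 0 = 0 := by simp [hT, pP]
  have hTN : T N = 1 := by
    rw [hT]
    show pP R N = 1
    rw [pP, ← htotS]
    exact Finset.sum_congr rfl fun n _ => by rw [if_pos n.isLt, hRrow n]
  have hTstep : ∀ n : Fin N, T ((n:ℕ)+1) = T (n:ℕ) + S n := by
    intro n
    show pP R ((n:ℕ)+1) = pP R (n:ℕ) + S n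
    rw [pP_succ R n, hRrow n]
  -- abbreviations
  set x : Fin k → ℝ := fun i => Fdist L i u with hx
  set y : Fin ℓ → ℝ := fun j => Gdist R j v with hy
  have hxmem : ∀ i, x i ∈ Icc (0:ℝ) 1 := fun i => Fdist_mem L hLnn i u
  have hymem : ∀ j, y j ∈ Icc (0:ℝ) 1 := fun j => Gdist_mem R hRnn j v
  have hzero : (0:ℝ) ∈ Icc (0:ℝ) 1 := ⟨le_rfl, by norm_num⟩
  have hone : (1:ℝ) ∈ Icc (0:ℝ) 1 := ⟨by norm_num, le_rfl⟩
  -- slice facts for the two copulas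
  have hslice1 : ∀ i, (∀ᵐ s, s ∈ Ioo (0:ℝ) 1 → DifferentiableAt ℝ (fun z => C₁ (x i) z) s) ∧
      (∀ s ∈ Ioo (0:ℝ) 1, |deriv (fun z => C₁ (x i) z) s| ≤ 1) := by
    intro i
    apply slice_facts
    · intro p hp q hq hpq
      have h2 := hC₁.2.2.2.2 0 (x i) p q hzero (hxmem i) hp hq (hxmem i).1 hpq
      have e1 := hC₁.2.1 p hp
      have e2 := hC₁.2.1 q hq
      linarith
    · intro p hp q hq hpq
      have h2 := hC₁.2.2.2.2 (x i) 1 p q (hxmem i) hone hp hq (hxmem i).2 hpq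
      have e1 := hC₁.2.2.2.1 p hp
      have e2 := hC₁.2.2.2.1 q hq
      linarith
  have hslice2 : ∀ j, (∀ᵐ s, s ∈ Ioo (0:ℝ) 1 → DifferentiableAt ℝ (fun z => C₂ z (y j)) s) ∧
      (∀ s ∈ Ioo (0:ℝ) 1, |deriv (fun z => C₂ z (y j)) s| ≤ 1) := by
    intro j
    apply slice_facts
    · intro p hp q hq hpq
      have h2 := hC₂.2.2.2.2 p q 0 (y j) hp hq hzero (hymem j) hpq (hymem j).1
      have e1 := hC₂.1 p hp
      have e2 := hC₂.1 q hq
      linarith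
    · intro p hp q hq hpq
      have h2 := hC₂.2.2.2.2 p q (y j) 1 hp hq (hymem j) hone hpq (hymem j).2
      have e1 := hC₂.2.2.1 p hp
      have e2 := hC₂.2.2.1 q hq
      linarith
  set P : ℝ → Prop := fun s => s ∈ Ioo (0:ℝ) 1 →
      ((∀ i, DifferentiableAt ℝ (fun z => C₁ (x i) z) s) ∧
       (∀ j, DifferentiableAt ℝ (fun z => C₂ z (y j)) s)) with hP
  have hgood : ∀ᵐ s, P s := by
    have h1 : ∀ᵐ s, ∀ i, (s ∈ Ioo (0:ℝ) 1 → DifferentiableAt ℝ (fun z => C₁ (x i) z) s) :=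
      (MeasureTheory.ae_all_iff).mpr fun i => (hslice1 i).1
    have h2 : ∀ᵐ s, ∀ j, (s ∈ Ioo (0:ℝ) 1 → DifferentiableAt ℝ (fun z => C₂ z (y j)) s) :=
      (MeasureTheory.ae_all_iff).mpr fun j => (hslice2 j).1
    filter_upwards [h1, h2] with s hs1 hs2 hmem
    exact ⟨fun i => hs1 i hmem, fun j => hs2 j hmem⟩
  have hBadnull : volume {s : ℝ | ¬ P s} = 0 := MeasureTheory.ae_iff.mp hgood
  set f : ℝ → ℝ := fun t => d2 (patch L C₁) u t * d1 (patch R C₂) t v with hf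
  -- the blockwise computation
  have hblock : ∀ n : Fin N,
      IntervalIntegrable f volume (T (n:ℕ)) (T ((n:ℕ)+1)) ∧
      ∫ t in T (n:ℕ)..T ((n:ℕ)+1), f t
        = ∑ i, ∑ j, An n i j * cstar C₁ C₂ (x i) (y j) := by
    intro n
    set α := T (n:ℕ) with hα
    set β := T ((n:ℕ)+1) with hβ
    have hβα : β = α + S n := hTstep n
    have hαβ : α < β := by rw [hβα]; linarith [hSpos n]
    set Gn : ℝ → ℝ := fun t => (t - α) / S n with hGn
    have hGnull : ∀ᵐ t, P (Gn t) := by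
      rw [MeasureTheory.ae_iff]
      have hfun : {t : ℝ | ¬ P (Gn t)}
          = (fun z : ℝ => z + (-α)) ⁻¹' ((fun z : ℝ => (S n)⁻¹ * z) ⁻¹' {s : ℝ | ¬ P s}) := by
        ext t
        simp only [Set.mem_preimage, Set.mem_setOf_eq, hGn]
        rw [div_eq_inv_mul, sub_eq_add_neg]
      rw [hfun, measure_preimage_add_right,
        Real.volume_preimage_mul_left (inv_ne_zero (hSne n)), hBadnull, mul_zero]
    have hsingle : ∀ᵐ t : ℝ, t ≠ β := by
      rw [MeasureTheory.ae_iff]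
      have h1 : {t : ℝ | ¬ t ≠ β} = {β} := by ext t; simp
      rw [h1]
      exact Real.volume_singleton
    have hGmem : ∀ t ∈ Ioo α β, Gn t ∈ Ioo (0:ℝ) 1 := by
      intro t ht
      constructor
      · exact div_pos (by linarith [ht.1]) (hSpos n)
      · rw [div_lt_one (hSpos n)]
        have h2 := ht.2; rw [hβα] at h2; linarith
    set g : ℝ → ℝ := fun t => ∑ i, ∑ j,
        L i n * R n j / (S n * S n) * (d2 C₁ (x i) (Gn t) * d1 C₂ (Gn t) (y j)) with hg
    have hae : ∀ᵐ t, t ∈ Set.uIoc α β → f t = g t := by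
      filter_upwards [hGnull, hsingle] with t hgd hne ht
      rw [Set.uIoc_of_le hαβ.le] at ht
      have htoo : t ∈ Ioo α β := ⟨ht.1, lt_of_le_of_ne ht.2 hne⟩
      have hsm : Gn t ∈ Ioo (0:ℝ) 1 := hGmem t htoo
      obtain ⟨hd1, hd2⟩ := hgd hsm
      have hq0 : qQ L (n:ℕ) = α := hqQL (n:ℕ)
      have hq1 : qQ L ((n:ℕ)+1) = β := hqQL ((n:ℕ)+1)
      have e1 : d2 (patch L C₁) u t = (∑ i, L i n * d2 C₁ (x i) (Gn t)) / S n := by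
        have h3 := d2_patch L hLnn C₁ u t n (by rw [hq0]; exact htoo.1)
          (by rw [hq1]; exact htoo.2) ?_
        · rw [hq0, hq1, hβα, show α + S n - α = S n from by ring] at h3
          exact h3
        · intro i
          rw [hq0, hq1, hβα, show α + S n - α = S n from by ring]
          exact hd1 i
      have e2 : d1 (patch R C₂) t v = (∑ j, R n j * d1 C₂ (Gn t) (y j)) / S n := by
        have hp0 : pP R (n:ℕ) = α := rfl
        have hp1 : pP R ((n:ℕ)+1) = β := rfl
        have h3 := d1_patch R hRnn C₂ v t n (by rw [hp0]; exact htoo.1)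
          (by rw [hp1]; exact htoo.2) ?_
        · rw [hp0, hp1, hβα, show α + S n - α = S n from by ring] at h3
          exact h3
        · intro j
          rw [hp0, hp1, hβα, show α + S n - α = S n from by ring]
          exact hd2 j
      show d2 (patch L C₁) u t * d1 (patch R C₂) t v = g t
      rw [e1, e2, div_mul_div_comm, Finset.sum_mul_sum, hg, Finset.sum_div]
      refine Finset.sum_congr rfl fun i _ => ?_
      rw [Finset.sum_div]
      refine Finset.sum_congr rfl fun j _ => ?_
      ring
    have hGnmeas : Measurable Gn := (measurable_id.sub_const α).div_const (S n)
    have hmeas_h : ∀ (i : Fin k) (j : Fin ℓ),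
        Measurable fun t => d2 C₁ (x i) (Gn t) * d1 C₂ (Gn t) (y j) := by
      intro i j
      exact ((measurable_deriv (fun z => C₁ (x i) z)).comp hGnmeas).mul
        ((measurable_deriv (fun z => C₂ z (y j))).comp hGnmeas)
    have hsummand : ∀ (i : Fin k) (j : Fin ℓ), MeasureTheory.IntegrableOn
        (fun t => L i n * R n j / (S n * S n) * (d2 C₁ (x i) (Gn t) * d1 C₂ (Gn t) (y j)))
        (Ioc α β) volume := by
      intro i j
      apply MeasureTheory.Integrable.mono'
        (g := fun _ => |L i n * R n j / (S n * S n)|) (MeasureTheory.integrable_const _)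
      · exact (measurable_const.mul (hmeas_h i j)).aestronglyMeasurable
      · rw [MeasureTheory.ae_restrict_iff' measurableSet_Ioc]
        filter_upwards [hsingle] with t hne ht
        have htoo : t ∈ Ioo α β := ⟨ht.1, lt_of_le_of_ne ht.2 hne⟩
        have hsm := hGmem t htoo
        have b1 := (hslice1 i).2 _ hsm
        have b2 := (hslice2 j).2 _ hsm
        rw [Real.norm_eq_abs, abs_mul]
        have hb : |d2 C₁ (x i) (Gn t) * d1 C₂ (Gn t) (y j)| ≤ 1 := by
          rw [abs_mul]
          calc |d2 C₁ (x i) (Gn t)| * |d1 C₂ (Gn t) (y j)| ≤ 1 * 1 :=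
              mul_le_mul b1 b2 (abs_nonneg _) (by norm_num)
            _ = 1 := by norm_num
        calc |L i n * R n j / (S n * S n)| * |d2 C₁ (x i) (Gn t) * d1 C₂ (Gn t) (y j)|
            ≤ |L i n * R n j / (S n * S n)| * 1 := by
              exact mul_le_mul_of_nonneg_left hb (abs_nonneg _)
          _ = |L i n * R n j / (S n * S n)| := mul_one _
    have hgInt : MeasureTheory.IntegrableOn g (Ioc α β) volume := by
      apply MeasureTheory.integrable_finset_sum
      intro i _
      apply MeasureTheory.integrable_finset_sum
      intro j _
      exact hsummand i j
    have hfInt : IntervalIntegrable f volume α β := by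
      rw [intervalIntegrable_iff_integrableOn_Ioc_of_le hαβ.le]
      apply MeasureTheory.Integrable.congr hgInt
      have haux : ∀ᵐ t ∂(volume.restrict (Ioc α β)), g t = f t := by
        rw [MeasureTheory.ae_restrict_iff' measurableSet_Ioc]
        filter_upwards [hae] with t h ht
        exact (h (by rwa [Set.uIoc_of_le hαβ.le])).symm
      exact haux
    refine ⟨hfInt, ?_⟩
    rw [intervalIntegral.integral_congr_ae hae]
    have hsummandII : ∀ (i : Fin k) (j : Fin ℓ), IntervalIntegrable
        (fun t => L i n * R n j / (S n * S n) * (d2 C₁ (x i) (Gn t) * d1 C₂ (Gn t) (y j)))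
        volume α β := by
      intro i j
      rw [intervalIntegrable_iff_integrableOn_Ioc_of_le hαβ.le]
      exact hsummand i j
    have hginner : ∀ i : Fin k, IntervalIntegrable
        (fun t => ∑ j, L i n * R n j / (S n * S n) * (d2 C₁ (x i) (Gn t) * d1 C₂ (Gn t) (y j)))
        volume α β := by
      intro i
      rw [intervalIntegrable_iff_integrableOn_Ioc_of_le hαβ.le]
      apply MeasureTheory.integrable_finset_sum
      intro j _
      exact hsummand i j
    show (∫ t in α..β, ∑ i, ∑ j,
        L i n * R n j / (S n * S n) * (d2 C₁ (x i) (Gn t) * d1 C₂ (Gn t) (y j)))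
        = ∑ i, ∑ j, An n i j * cstar C₁ C₂ (x i) (y j)
    rw [intervalIntegral.integral_finset_sum (fun i _ => hginner i)]
    refine Finset.sum_congr rfl fun i _ => ?_
    rw [intervalIntegral.integral_finset_sum (fun j _ => hsummandII i j)]
    refine Finset.sum_congr rfl fun j _ => ?_
    rw [intervalIntegral.integral_const_mul]
    have hcomp : (∫ t in α..β, d2 C₁ (x i) (Gn t) * d1 C₂ (Gn t) (y j))
        = S n * cstar C₁ C₂ (x i) (y j) := by
      have h1 : (∫ t in α..β, d2 C₁ (x i) (Gn t) * d1 C₂ (Gn t) (y j))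
          = ∫ z in α - α..β - α, d2 C₁ (x i) (z / S n) * d1 C₂ (z / S n) (y j) :=
        intervalIntegral.integral_comp_sub_right
          (fun z => d2 C₁ (x i) (z / S n) * d1 C₂ (z / S n) (y j)) α
      rw [h1, show α - α = (0:ℝ) by ring, show β - α = S n by rw [hβα]; ring]
      have h2 : (∫ z in (0:ℝ)..S n, d2 C₁ (x i) (z / S n) * d1 C₂ (z / S n) (y j))
          = S n • ∫ z in (0:ℝ)/S n..S n/S n, d2 C₁ (x i) z * d1 C₂ z (y j) :=
        intervalIntegral.integral_comp_div
          (f := fun z => d2 C₁ (x i) z * d1 C₂ z (y j)) (hSne n)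
      rw [h2, zero_div, div_self (hSne n), smul_eq_mul]
      rfl
    rw [hcomp, hrank1 n i j]
    show L i n * R n j / (S n * S n) * (S n * cstar C₁ C₂ (x i) (y j))
        = L i n * R n j / S n * cstar C₁ C₂ (x i) (y j)
    field_simp [hSne n]
  -- assemble the blocks
  have hsplit : (∑ m ∈ Finset.range N, ∫ t in T m..T (m+1), f t)
      = ∫ t in (T 0)..(T N), f t :=
    intervalIntegral.sum_integral_adjacent_intervals (fun m hm => (hblock ⟨m, hm⟩).1)
  rw [hT0, hTN] at hsplit
  have hLHS : cstar (patch L C₁) (patch R C₂) u v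
      = ∑ m ∈ Finset.range N, ∫ t in T m..T (m+1), f t := by
    rw [hsplit]; rfl
  have hfin : (∑ n : Fin N, ∫ t in T (n:ℕ)..T ((n:ℕ)+1), f t)
      = ∑ m ∈ Finset.range N, ∫ t in T m..T (m+1), f t :=
    Fin.sum_univ_eq_sum_range (fun m => ∫ t in T m..T (m+1), f t) N
  rw [hLHS, ← hfin]
  rw [Finset.sum_congr rfl fun n (_ : n ∈ Finset.univ) => (hblock n).2]
  show (∑ n : Fin N, ∑ i, ∑ j, An n i j * cstar C₁ C₂ (x i) (y j))
      = ∑ i, ∑ j, a i j * cstar C₁ C₂ (Fdist a i u) (Gdist a j v)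
  rw [Finset.sum_comm]
  refine Finset.sum_congr rfl fun i _ => ?_
  rw [Finset.sum_comm]
  refine Finset.sum_congr rfl fun j _ => ?_
  have hxi : x i = Fdist a i u := by
    rw [hx]
    show Fdist L i u = Fdist a i u
    rw [Fdist, Fdist, hpPL, hpPL]
  have hyj : y j = Gdist a j v := by
    rw [hy]
    show Gdist R j v = Gdist a j v
    rw [Gdist, Gdist, hqQR, hqQR]
  rw [← hsumAn i j, Finset.sum_mul]
  exact Finset.sum_congr rfl fun n _ => by rw [hxi, hyj]
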